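/- Assume hypothesis (Hp)* with ℓ̂₁(·,0,·) ≡ 0 and let (S̄, w̄⁰, w̄, ᾱ, 0, ȳ⁰, ȳ, ȳ^ℓ, β̄) be the reference canonical local minimizer of the rescaled problem with β̄(S̄) < K. Then there exists δ > 0 such that the projected profitable set 𝒫' and the projected δ-reachable set ℛ'_δ are locally separated at (ȳ⁰, ȳ, ȳᶜ)(S̄): there is a neighborhood V of (ȳ⁰, ȳ, ȳᶜ)(S̄) in ℝ^{1+n+1} with 𝒫' ∩ ℛ'_δ ∩ V = {(ȳ⁰, ȳ, ȳᶜ)(S̄)}. -/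

import Mathlib

open MeasureTheory Set Filter Asymptotics Topology
noncomputable section

/-- `ℝ^n` with the Euclidean structure. -/
abbrev Vec (n : ℕ) := EuclideanSpace ℝ (Fin n)

/-- A convex cone (not necessarily containing `0`). -/
def IsConvexCone {E : Type*} [AddCommGroup E] [Module ℝ E] (K : Set E) : Prop :=
  Convex ℝ K ∧ ∀ ⦃c : ℝ⦄, 0 < c → ∀ ⦃x⦄, x ∈ K → c • x ∈ K

/-- `K` is a Boltyanski approximating cone for `Z` at `z`. -/
def IsBoltyanskiCone {E : Type*} [NormedAddCommGroup E] [NormedSpace ℝ E]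
    (Z : Set E) (z : E) (K : Set E) : Prop :=
  IsConvexCone K ∧
  ∃ (M : ℕ) (C : Set (Vec M)) (V : Set (Vec M)) (F : Vec M → E) (L : Vec M →ₗ[ℝ] E),
    IsConvexCone C ∧ V ∈ 𝓝 (0 : Vec M) ∧
    ContinuousOn F (V ∩ C) ∧ (∀ v ∈ V ∩ C, F v ∈ Z) ∧ F 0 = z ∧
    (fun v => F v - F 0 - L v) =o[𝓝[V ∩ C] 0] (fun v => ‖v‖) ∧
    L '' C = K

variable {n m q : ℕ}

/-- The extended (space-time) dynamics
`Fᵉ(x, w⁰, w, a) = w⁰ f(x,a) + Σᵢ wⁱ gᵢ(x)`. -/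
def Fe (f : Vec n → Vec q → Vec n) (g : Fin m → Vec n → Vec n)
    (x : Vec n) (w0 : ℝ) (w : Vec m) (a : Vec q) : Vec n :=
  w0 • f x a + ∑ i, w i • g i x

/-- The extended Lagrangian `ℓᵉ(x, w⁰, w, a) = ℓ₀(x,a) w⁰ + ℓ̂₁(x, w⁰, w)`. -/
def extL (ℓ0 : Vec n → Vec q → ℝ) (ℓhat1 : Vec n → ℝ → Vec m → ℝ)
    (x : Vec n) (w0 : ℝ) (w : Vec m) (a : Vec q) : ℝ :=
  ℓ0 x a * w0 + ℓhat1 x w0 w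

/-- `ℓ̂₁` is the recession function of `ℓ₁`:
`ℓ̂₁(x, w⁰, w) = lim_{r → w⁰, r > 0} r ℓ₁(x, w/r)`. -/
def IsRecessionOf (C : Set (Vec m)) (ℓhat1 : Vec n → ℝ → Vec m → ℝ)
    (ℓ1 : Vec n → Vec m → ℝ) : Prop :=
  ∀ x : Vec n, ∀ w0 : ℝ, 0 ≤ w0 → ∀ w ∈ C,
    Tendsto (fun r : ℝ => r * ℓ1 x (r⁻¹ • w)) (𝓝[Set.Ioi (0:ℝ)] w0) (𝓝 (ℓhat1 x w0 w))

/-- A space-time process of the extended control system. -/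
structure IsSTProcess (C : Set (Vec m)) (A : Set (Vec q))
    (f : Vec n → Vec q → Vec n) (g : Fin m → Vec n → Vec n) (xck : Vec n)
    (S : ℝ) (w0 : ℝ → ℝ) (w : ℝ → Vec m) (α : ℝ → Vec q)
    (y0 : ℝ → ℝ) (y : ℝ → Vec n) (β : ℝ → ℝ) : Prop where
  hS : 0 < S
  meas_w0 : AEMeasurable w0 (volume.restrict (Icc (0:ℝ) S))
  meas_w : AEStronglyMeasurable w (volume.restrict (Icc (0:ℝ) S))
  meas_α : AEStronglyMeasurable α (volume.restrict (Icc (0:ℝ) S))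
  ess_bdd : ∃ M : ℝ, ∀ᵐ s ∂(volume.restrict (Icc (0:ℝ) S)), |w0 s| + ‖w s‖ ≤ M
  mem_ae : ∀ᵐ s ∂(volume.restrict (Icc (0:ℝ) S)), 0 ≤ w0 s ∧ w s ∈ C ∧ α s ∈ A
  essinf_pos : ∃ c : ℝ, 0 < c ∧ ∀ᵐ s ∂(volume.restrict (Icc (0:ℝ) S)), c ≤ w0 s + ‖w s‖
  int_w0 : IntervalIntegrable w0 volume 0 S
  int_F : IntervalIntegrable (fun t => Fe f g (y t) (w0 t) (w t) (α t)) volume 0 S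
  int_w : IntervalIntegrable (fun t => ‖w t‖) volume 0 S
  sol_y0 : ∀ s ∈ Icc (0:ℝ) S, y0 s = ∫ t in (0:ℝ)..s, w0 t
  sol_y : ∀ s ∈ Icc (0:ℝ) S, y s = xck + ∫ t in (0:ℝ)..s, Fe f g (y t) (w0 t) (w t) (α t)
  sol_β : ∀ s ∈ Icc (0:ℝ) S, β s = ∫ t in (0:ℝ)..s, ‖w t‖

/-- Feasibility of a space-time process: final space-time point in the target, and
total variation bounded by `K`. -/
def STFeasible (Tgt : Set (ℝ × Vec n)) (K : EReal)
    (S : ℝ) (y0 : ℝ → ℝ) (y : ℝ → Vec n) (β : ℝ → ℝ) : Prop :=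
  (y0 S, y S) ∈ Tgt ∧ ((β S : ℝ) : EReal) ≤ K

/-- The cost of a space-time process. -/
def STCost (Ψ : ℝ → Vec n → ℝ) (ℓ0 : Vec n → Vec q → ℝ) (ℓhat1 : Vec n → ℝ → Vec m → ℝ)
    (S : ℝ) (w0 : ℝ → ℝ) (w : ℝ → Vec m) (α : ℝ → Vec q)
    (y0 : ℝ → ℝ) (y : ℝ → Vec n) : ℝ :=
  Ψ (y0 S) (y S) + ∫ s in (0:ℝ)..S, extL ℓ0 ℓhat1 (y s) (w0 s) (w s) (α s)

/-- The continuous constant extension of a path on `[0,S]` evaluated at `t`. -/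
def clampT (S t : ℝ) : ℝ := max 0 (min t S)

/-- The distance `d((S₁,z₁),(S₂,z₂)) = |S₁−S₂| + ‖z̃₁−z̃₂‖_∞`, where tildes denote
continuous constant extensions. -/
def dProc {E : Type*} [PseudoMetricSpace E] (S₁ : ℝ) (z₁ : ℝ → E) (S₂ : ℝ) (z₂ : ℝ → E) : ℝ :=
  |S₁ - S₂| + ⨆ t : ℝ, dist (z₁ (clampT S₁ t)) (z₂ (clampT S₂ t))

/-- Local minimizer of the space-time problem. -/
def IsSTLocalMin (C : Set (Vec m)) (A : Set (Vec q))
    (f : Vec n → Vec q → Vec n) (g : Fin m → Vec n → Vec n) (xck : Vec n)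
    (Tgt : Set (ℝ × Vec n)) (K : EReal) (Ψ : ℝ → Vec n → ℝ)
    (ℓ0 : Vec n → Vec q → ℝ) (ℓhat1 : Vec n → ℝ → Vec m → ℝ)
    (S : ℝ) (w0 : ℝ → ℝ) (w : ℝ → Vec m) (α : ℝ → Vec q)
    (y0 : ℝ → ℝ) (y : ℝ → Vec n) (β : ℝ → ℝ) : Prop :=
  IsSTProcess C A f g xck S w0 w α y0 y β ∧ STFeasible Tgt K S y0 y β ∧
  ∃ δ : ℝ, 0 < δ ∧ ∀ (S' : ℝ) (w0' : ℝ → ℝ) (w' : ℝ → Vec m) (α' : ℝ → Vec q)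
      (y0' : ℝ → ℝ) (y' : ℝ → Vec n) (β' : ℝ → ℝ),
    IsSTProcess C A f g xck S' w0' w' α' y0' y' β' →
    STFeasible Tgt K S' y0' y' β' →
    dProc S (fun s => (y0 s, y s, β s)) S' (fun s => (y0' s, y' s, β' s)) < δ →
    STCost Ψ ℓ0 ℓhat1 S w0 w α y0 y ≤ STCost Ψ ℓ0 ℓhat1 S' w0' w' α' y0' y'

/-- Global minimizer of the space-time problem. -/
def IsSTGlobalMin (C : Set (Vec m)) (A : Set (Vec q))
    (f : Vec n → Vec q → Vec n) (g : Fin m → Vec n → Vec n) (xck : Vec n)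
    (Tgt : Set (ℝ × Vec n)) (K : EReal) (Ψ : ℝ → Vec n → ℝ)
    (ℓ0 : Vec n → Vec q → ℝ) (ℓhat1 : Vec n → ℝ → Vec m → ℝ)
    (S : ℝ) (w0 : ℝ → ℝ) (w : ℝ → Vec m) (α : ℝ → Vec q)
    (y0 : ℝ → ℝ) (y : ℝ → Vec n) (β : ℝ → ℝ) : Prop :=
  IsSTProcess C A f g xck S w0 w α y0 y β ∧ STFeasible Tgt K S y0 y β ∧
  ∀ (S' : ℝ) (w0' : ℝ → ℝ) (w' : ℝ → Vec m) (α' : ℝ → Vec q)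
      (y0' : ℝ → ℝ) (y' : ℝ → Vec n) (β' : ℝ → ℝ),
    IsSTProcess C A f g xck S' w0' w' α' y0' y' β' →
    STFeasible Tgt K S' y0' y' β' →
    STCost Ψ ℓ0 ℓhat1 S w0 w α y0 y ≤ STCost Ψ ℓ0 ℓhat1 S' w0' w' α' y0' y'

/-- Canonical process: `w⁰ + |w| = 1` a.e. on `[0,S]`. -/
def STCanonical (S : ℝ) (w0 : ℝ → ℝ) (w : ℝ → Vec m) : Prop :=
  ∀ᵐ s ∂(volume.restrict (Icc (0:ℝ) S)), w0 s + ‖w s‖ = 1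

/-- The unmaximized Hamiltonian `H`. -/
def Ham (f : Vec n → Vec q → Vec n) (g : Fin m → Vec n → Vec n)
    (ℓ0 : Vec n → Vec q → ℝ) (ℓhat1 : Vec n → ℝ → Vec m → ℝ)
    (x : Vec n) (p0 : ℝ) (p : Vec n) (pi lam : ℝ)
    (w0 : ℝ) (w : Vec m) (a : Vec q) : ℝ :=
  p0 * w0 + (inner ℝ p (Fe f g x w0 w a) : ℝ) + pi * ‖w‖
    - lam * extL ℓ0 ℓhat1 x w0 w a

/-- The maximized Hamiltonian `𝐇`, the supremum of `H` over
`W × A = {(w⁰,w) : w⁰ ≥ 0, w ∈ C, w⁰ + |w| = 1} × A`. -/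
def bigH (C : Set (Vec m)) (A : Set (Vec q))
    (f : Vec n → Vec q → Vec n) (g : Fin m → Vec n → Vec n)
    (ℓ0 : Vec n → Vec q → ℝ) (ℓhat1 : Vec n → ℝ → Vec m → ℝ)
    (x : Vec n) (p0 : ℝ) (p : Vec n) (pi lam : ℝ) : ℝ :=
  sSup { h : ℝ | ∃ (w0 : ℝ) (w : Vec m) (a : Vec q),
    0 ≤ w0 ∧ w ∈ C ∧ w0 + ‖w‖ = 1 ∧ a ∈ A ∧
    h = Ham f g ℓ0 ℓhat1 x p0 p pi lam w0 w a }

/-- The polar of a subset of `ℝ × ℝⁿ`. -/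
def polarRN (Γ : Set (ℝ × Vec n)) : Set (ℝ × Vec n) :=
  { p | ∀ z ∈ Γ, p.1 * z.1 + (inner ℝ p.2 z.2 : ℝ) ≤ 0 }

/-- The conditions of the First Order Maximum Principle for a multiplier
`(p₀, p, π, λ)` relative to the approximating cone `Γ` of the target. -/
def FOMP (C : Set (Vec m)) (A : Set (Vec q))
    (f : Vec n → Vec q → Vec n) (g : Fin m → Vec n → Vec n)
    (ℓ0 : Vec n → Vec q → ℝ) (ℓhat1 : Vec n → ℝ → Vec m → ℝ)
    (Ψ : ℝ → Vec n → ℝ) (K : EReal)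
    (S : ℝ) (w0 : ℝ → ℝ) (w : ℝ → Vec m) (α : ℝ → Vec q)
    (y0 : ℝ → ℝ) (y : ℝ → Vec n) (β : ℝ → ℝ)
    (Γ : Set (ℝ × Vec n)) (p0 : ℝ) (p : ℝ → Vec n) (pi lam : ℝ) : Prop :=
  pi ≤ 0 ∧ 0 ≤ lam ∧
  -- (i) non-triviality
  (¬ (p0 = 0 ∧ (∀ s ∈ Icc (0:ℝ) S, p s = 0) ∧ lam = 0)) ∧
  (0 < y0 S → ¬ ((∀ s ∈ Icc (0:ℝ) S, p s = 0) ∧ lam = 0)) ∧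
  -- (ii) non-transversality
  (((β S : ℝ) : EReal) < K → pi = 0) ∧
  (∃ γ ∈ polarRN Γ,
    p0 = -lam * deriv (fun τ => Ψ τ (y S)) (y0 S) - γ.1 ∧
    p S = -lam • gradient (fun ξ => Ψ (y0 S) ξ) (y S) - γ.2) ∧
  -- (iii) adjoint equation (p absolutely continuous with the stated a.e. derivative)
  (∃ pdot : ℝ → Vec n, IntervalIntegrable pdot volume 0 S ∧
    (∀ s ∈ Icc (0:ℝ) S, p s = p 0 + ∫ t in (0:ℝ)..s, pdot t) ∧
    (∀ᵐ s ∂(volume.restrict (Icc (0:ℝ) S)),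
      pdot s = - gradient
        (fun x => Ham f g ℓ0 ℓhat1 x p0 (p s) pi lam (w0 s) (w s) (α s)) (y s))) ∧
  -- (iv) first order maximization
  (∀ᵐ s ∂(volume.restrict (Icc (0:ℝ) S)),
    Ham f g ℓ0 ℓhat1 (y s) p0 (p s) pi lam (w0 s) (w s) (α s)
      = bigH C A f g ℓ0 ℓhat1 (y s) p0 (p s) pi lam) ∧
  -- (v) vanishing of the Hamiltonian
  (∀ s ∈ Icc (0:ℝ) S, bigH C A f g ℓ0 ℓhat1 (y s) p0 (p s) pi lam = 0)

/-- Regularity hypotheses (Hp) (ii)–(v) on the data. -/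
structure HpReg (C : Set (Vec m)) (A : Set (Vec q))
    (f : Vec n → Vec q → Vec n) (g : Fin m → Vec n → Vec n)
    (ℓ0 : Vec n → Vec q → ℝ) (ℓhat1 : Vec n → ℝ → Vec m → ℝ)
    (Ψ : ℝ → Vec n → ℝ) : Prop where
  hf_cont : Continuous (fun z : Vec n × Vec q => f z.1 z.2)
  hf_diff : ∃ Df : Vec n → Vec q → (Vec n →L[ℝ] Vec n),
    Continuous (fun z : Vec n × Vec q => Df z.1 z.2) ∧
    ∀ (x : Vec n) (a : Vec q), HasFDerivAt (fun x => f x a) (Df x a) x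
  hg : ∀ i, ContDiff ℝ 1 (g i)
  hl0_cont : Continuous (fun z : Vec n × Vec q => ℓ0 z.1 z.2)
  hl0_diff : ∃ Dl0 : Vec n → Vec q → Vec n,
    Continuous (fun z : Vec n × Vec q => Dl0 z.1 z.2) ∧
    ∀ (x : Vec n) (a : Vec q), HasGradientAt (fun x => ℓ0 x a) (Dl0 x a) x
  hl1_cont : ContinuousOn (fun z : Vec n × ℝ × Vec m => ℓhat1 z.1 z.2.1 z.2.2)
    (Set.univ ×ˢ (Set.Ici (0:ℝ)) ×ˢ C)
  hl1_diff : ∃ Dl1 : Vec n → ℝ → Vec m → Vec n,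
    ContinuousOn (fun z : Vec n × ℝ × Vec m => Dl1 z.1 z.2.1 z.2.2)
      (Set.univ ×ˢ (Set.Ici (0:ℝ)) ×ˢ C) ∧
    ∀ (x : Vec n) (w0 : ℝ) (w : Vec m), 0 ≤ w0 → w ∈ C →
      HasGradientAt (fun x => ℓhat1 x w0 w) (Dl1 x w0 w) x
  hΨ : ContDiff ℝ 1 (fun z : ℝ × Vec n => Ψ z.1 z.2)

/-- Hypotheses (Hp) (i) on the sets. -/
structure HpSets (C : Set (Vec m)) (A : Set (Vec q)) (Tgt : Set (ℝ × Vec n))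
    (K : EReal) : Prop where
  hTgt_closed : IsClosed Tgt
  hTgt_sub : Tgt ⊆ {z : ℝ × Vec n | 0 ≤ z.1}
  hA : IsCompact A
  hC_closed : IsClosed C
  hC_cone : ∀ ⦃c : ℝ⦄, 0 < c → ∀ ⦃x⦄, x ∈ C → c • x ∈ C
  hK : 0 < K

/-- The cone `𝒞 ⊆ ℝ^{m₁+m₂}` splits as `𝒞₁ × 𝒞₂`, where `𝒞₁ ⊆ ℝ^{m₁}` is a closed
cone containing the coordinate lines `ℝ𝐞ᵢ` and `𝒞₂ ⊆ ℝ^{m₂}` is a closed cone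
containing no straight lines. -/
def SplitCone (m₁ m₂ : ℕ) (C : Set (Vec (m₁ + m₂))) : Prop :=
  ∃ (C1 : Set (Vec m₁)) (C2 : Set (Vec m₂)),
    IsClosed C1 ∧ (∀ ⦃r : ℝ⦄, 0 < r → ∀ ⦃x⦄, x ∈ C1 → r • x ∈ C1) ∧
    (∀ (i : Fin m₁) (r : ℝ), (r • EuclideanSpace.single i (1:ℝ)) ∈ C1) ∧
    IsClosed C2 ∧ (∀ ⦃r : ℝ⦄, 0 < r → ∀ ⦃x⦄, x ∈ C2 → r • x ∈ C2) ∧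
    (∀ v : Vec m₂, (∀ r : ℝ, r • v ∈ C2) → v = 0) ∧
    C = { w : Vec (m₁ + m₂) |
      (WithLp.toLp 2 (fun i => w (Fin.castAdd m₂ i)) : Vec m₁) ∈ C1 ∧
      (WithLp.toLp 2 (fun i => w (Fin.natAdd m₁ i)) : Vec m₂) ∈ C2 }

/-- Formal iterated brackets, built from variables `X j` and the bracket operation. -/
inductive FormalBracket : Type
  | var : ℕ → FormalBracket
  | br : FormalBracket → FormalBracket → FormalBracket
deriving DecidableEq

namespace FormalBracket

/-- The length of a bracket: the number of variable occurrences. -/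
def lengthB : FormalBracket → ℕ
  | var _ => 1
  | br b₁ b₂ => lengthB b₁ + lengthB b₂

/-- `Seq(b)`: the ordered list of variable indices occurring in `b`. -/
def varsB : FormalBracket → List ℕ
  | var j => [j]
  | br b₁ b₂ => varsB b₁ ++ varsB b₂

/-- `S` is a subbracket of `b`. -/
def isSub (S : FormalBracket) : FormalBracket → Bool
  | var j => S = var j
  | br b₁ b₂ => S = br b₁ b₂ || isSub S b₁ || isSub S b₂

/-- The number of differentiations `𝔡(S; b)`. -/
def diffCount (S : FormalBracket) : FormalBracket → ℕ
  | var _ => 0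
  | br b₁ b₂ =>
    if S = br b₁ b₂ then 0
    else if isSub S b₁ then 1 + diffCount S b₁
    else 1 + diffCount S b₂

/-- The switch-number `r_b`: `r_{Xⱼ} = 1`, `r_{[b₁,b₂]} = 2(r_{b₁} + r_{b₂})`. -/
def switchNum : FormalBracket → ℕ
  | var _ => 1
  | br b₁ b₂ => 2 * (switchNum b₁ + switchNum b₂)

end FormalBracket

/-- The Lie bracket of two vector fields: `[X,Y](x) = DY(x)·X(x) − DX(x)·Y(x)`. -/
def lieB {n : ℕ} (X Y : Vec n → Vec n) : Vec n → Vec n :=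
  fun x => fderiv ℝ Y x (X x) - fderiv ℝ X x (Y x)

/-- Evaluation of a formal bracket on an assignment of vector fields to variables. -/
def evalBracket {n : ℕ} (φ : ℕ → Vec n → Vec n) : FormalBracket → (Vec n → Vec n)
  | .var j => φ j
  | .br b₁ b₂ => lieB (evalBracket φ b₁) (evalBracket φ b₂)

/-- `B` is a `C^k`-admissible iterated Lie bracket of length `≥ 2` of the vector fields
`g₁,…,g_{m₁}`: `B = b(F₁,…)` for a formal bracket `b` of length `≥ 2` whose variables are
consecutive, with each substituted field among the `gᵢ` and of class
`C^{𝔡(Xⱼ;b)+k}`. -/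
def IsAdmissibleBracket {n : ℕ} (k m₁ : ℕ) (g : Fin m₁ → Vec n → Vec n)
    (B : Vec n → Vec n) : Prop :=
  ∃ b : FormalBracket, 2 ≤ b.lengthB ∧
    (∃ μ : ℕ, b.varsB = List.range' (μ + 1) b.lengthB) ∧
    ∃ φ : ℕ → Vec n → Vec n,
      (∀ j ∈ b.varsB, (∃ i : Fin m₁, φ j = g i) ∧
        ContDiff ℝ (FormalBracket.diffCount (.var j) b + k) (φ j)) ∧
      B = evalBracket φ b

/-- The conditions of the Higher Order Maximum Principle for a multiplier
`(p₀, p, π, λ)`: `π = 0`, the First Order Maximum Principle conditions, and the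
orthogonality relations `p·gᵢ(ȳ) = 0` (`i ≤ m₁`) and `p·B(ȳ) = 0` for every
`C⁰`-admissible bracket `B`. -/
def HOMP {n m₁ m₂ q : ℕ} (C : Set (Vec (m₁ + m₂))) (A : Set (Vec q))
    (f : Vec n → Vec q → Vec n) (g : Fin (m₁ + m₂) → Vec n → Vec n)
    (ℓ0 : Vec n → Vec q → ℝ) (ℓhat1 : Vec n → ℝ → Vec (m₁ + m₂) → ℝ)
    (Ψ : ℝ → Vec n → ℝ) (K : EReal)
    (S : ℝ) (w0 : ℝ → ℝ) (w : ℝ → Vec (m₁ + m₂)) (α : ℝ → Vec q)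
    (y0 : ℝ → ℝ) (y : ℝ → Vec n) (β : ℝ → ℝ)
    (Γ : Set (ℝ × Vec n)) (p0 : ℝ) (p : ℝ → Vec n) (pi lam : ℝ) : Prop :=
  pi = 0 ∧
  FOMP C A f g ℓ0 ℓhat1 Ψ K S w0 w α y0 y β Γ p0 p pi lam ∧
  (∀ s ∈ Icc (0:ℝ) S, ∀ i : Fin m₁,
    (inner ℝ (p s) (g (Fin.castAdd m₂ i) (y s)) : ℝ) = 0) ∧
  (∀ s ∈ Icc (0:ℝ) S, ∀ B : Vec n → Vec n,
    IsAdmissibleBracket 0 m₁ (fun i => g (Fin.castAdd m₂ i)) B →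
    (inner ℝ (p s) (B (y s)) : ℝ) = 0)

/-- A Carathéodory solution of the rescaled space-time control system
`dy⁰/ds = w⁰(1+ζ)`, `dy/ds = Fᵉ(y,w⁰,w,α)(1+ζ)`, `dy^ℓ/ds = ℓᵉ(y,w⁰,w,α)(1+ζ)`,
`dβ/ds = |w|(1+ζ)` on `[0,S]`, with initial datum `(y0i, yi, yli, βi)`. -/
def IsRescaledSol {n m q : ℕ}
    (f : Vec n → Vec q → Vec n) (g : Fin m → Vec n → Vec n)
    (ℓ0 : Vec n → Vec q → ℝ) (ℓhat1 : Vec n → ℝ → Vec m → ℝ)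
    (S : ℝ) (w0 : ℝ → ℝ) (w : ℝ → Vec m) (α : ℝ → Vec q) (ζ : ℝ → ℝ)
    (y0i : ℝ) (yi : Vec n) (yli βi : ℝ)
    (y0 : ℝ → ℝ) (y : ℝ → Vec n) (yl β : ℝ → ℝ) : Prop :=
  IntervalIntegrable (fun t => w0 t * (1 + ζ t)) volume 0 S ∧
  IntervalIntegrable (fun t => (1 + ζ t) • Fe f g (y t) (w0 t) (w t) (α t)) volume 0 S ∧
  IntervalIntegrable (fun t => extL ℓ0 ℓhat1 (y t) (w0 t) (w t) (α t) * (1 + ζ t))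
    volume 0 S ∧
  IntervalIntegrable (fun t => ‖w t‖ * (1 + ζ t)) volume 0 S ∧
  (∀ s ∈ Icc (0:ℝ) S, y0 s = y0i + ∫ t in (0:ℝ)..s, w0 t * (1 + ζ t)) ∧
  (∀ s ∈ Icc (0:ℝ) S,
    y s = yi + ∫ t in (0:ℝ)..s, (1 + ζ t) • Fe f g (y t) (w0 t) (w t) (α t)) ∧
  (∀ s ∈ Icc (0:ℝ) S,
    yl s = yli + ∫ t in (0:ℝ)..s, extL ℓ0 ℓhat1 (y t) (w0 t) (w t) (α t) * (1 + ζ t)) ∧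
  (∀ s ∈ Icc (0:ℝ) S, β s = βi + ∫ t in (0:ℝ)..s, ‖w t‖ * (1 + ζ t))

/-- A piecewise constant function on `[a,b]`: constant on the subintervals of some
finite partition of `[a,b]`. -/
def PiecewiseConstOn {X : Type*} (u : ℝ → X) (a b : ℝ) : Prop :=
  ∃ (N : ℕ) (t : ℕ → ℝ), t 0 = a ∧ t N = b ∧ (∀ i < N, t i ≤ t (i + 1)) ∧
    ∀ i < N, ∀ x ∈ Set.Ico (t i) (t (i + 1)), u x = u (t i)

/-- `t` is a Lebesgue point of `φ`. -/
def LebPoint {E : Type*} [NormedAddCommGroup E] (φ : ℝ → E) (t : ℝ) : Prop :=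
  Tendsto (fun δ : ℝ => (1 / δ) * ∫ σ in (t - δ)..(t + δ), ‖φ σ - φ t‖)
    (𝓝[>] (0:ℝ)) (𝓝 0)

/-- Hypothesis (Hp)*: the regularity hypotheses (Hp) together with uniform continuity
and boundedness of `ℓᵉ`, `f`, the `gᵢ`, their `x`-partial derivatives, and of all the
`C⁰`-admissible iterated Lie brackets. -/
structure HpStar {n m₁ m₂ q : ℕ} (C : Set (Vec (m₁ + m₂))) (A : Set (Vec q))
    (f : Vec n → Vec q → Vec n) (g : Fin (m₁ + m₂) → Vec n → Vec n)
    (ℓ0 : Vec n → Vec q → ℝ) (ℓhat1 : Vec n → ℝ → Vec (m₁ + m₂) → ℝ)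
    (Ψ : ℝ → Vec n → ℝ) : Prop where
  hReg : HpReg C A f g ℓ0 ℓhat1 Ψ
  hf_bdd : ∃ M : ℝ, ∀ (x : Vec n), ∀ a ∈ A,
    ‖f x a‖ ≤ M ∧ ‖fderiv ℝ (fun x => f x a) x‖ ≤ M
  hf_uc : ∀ a ∈ A, UniformContinuous (fun x => f x a) ∧
    UniformContinuous (fun x => fderiv ℝ (fun x => f x a) x)
  hg_bdd : ∃ M : ℝ, ∀ (i : Fin (m₁ + m₂)) (x : Vec n),
    ‖g i x‖ ≤ M ∧ ‖fderiv ℝ (g i) x‖ ≤ M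
  hg_uc : ∀ i : Fin (m₁ + m₂), UniformContinuous (g i) ∧
    UniformContinuous (fun x => fderiv ℝ (g i) x)
  hl_bdd : ∃ M : ℝ, ∀ (x : Vec n) (w0 : ℝ) (w : Vec (m₁ + m₂)), ∀ a ∈ A,
    0 ≤ w0 → w ∈ C → w0 + ‖w‖ ≤ 1 →
      |extL ℓ0 ℓhat1 x w0 w a| ≤ M ∧
      ‖gradient (fun x => extL ℓ0 ℓhat1 x w0 w a) x‖ ≤ M
  hB_bdd_uc : ∀ B : Vec n → Vec n,
    IsAdmissibleBracket 0 m₁ (fun i => g (Fin.castAdd m₂ i)) B →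
    UniformContinuous B ∧ ∃ M : ℝ, ∀ x, ‖B x‖ ≤ M

/-! Since `d` dominates the distance between final values, a process that is `δ`-close to the
reference one for small `δ` ends with `β(S̄) < K`; it is therefore feasible, and local
minimality forbids its final cost to lie below `ȳᶜ(S̄)`. -/

theorem IntervalIntegrable.continuousOn_of_eq_add_primitive {E : Type*}
    [NormedAddCommGroup E] [NormedSpace ℝ E] {φ : ℝ → E} {a b : ℝ}
    (hφ : IntervalIntegrable φ volume a b) (hab : a ≤ b) {c : E} {z : ℝ → E}
    (hz : ∀ s ∈ Icc a b, z s = c + ∫ t in a..s, φ t) :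
    ContinuousOn z (Icc a b) := by
  have hprim := intervalIntegral.continuousOn_primitive_interval' hφ left_mem_uIcc
  rw [uIcc_of_le hab] at hprim
  exact (continuousOn_const.add hprim).congr hz

theorem IsRescaledSol.continuousOn_costPath {f : Vec n → Vec q → Vec n}
    {g : Fin m → Vec n → Vec n} {ℓ0 : Vec n → Vec q → ℝ} {ℓhat1 : Vec n → ℝ → Vec m → ℝ}
    {Ψ : ℝ → Vec n → ℝ} (hΨ : Continuous fun z : ℝ × Vec n => Ψ z.1 z.2)
    {S : ℝ} (hS : 0 ≤ S) {w0 : ℝ → ℝ} {w : ℝ → Vec m} {α : ℝ → Vec q} {ζ : ℝ → ℝ}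
    {y0i : ℝ} {yi : Vec n} {yli βi : ℝ} {y0 : ℝ → ℝ} {y : ℝ → Vec n} {yl β : ℝ → ℝ}
    (h : IsRescaledSol f g ℓ0 ℓhat1 S w0 w α ζ y0i yi yli βi y0 y yl β) :
    ContinuousOn (fun s => (y0 s, y s, Ψ (y0 s) (y s) + yl s, β s)) (Icc 0 S) := by
  obtain ⟨i0, iy, il, iβ, e0, ey, el, eβ⟩ := h
  have c0 := i0.continuousOn_of_eq_add_primitive hS e0
  have cy := iy.continuousOn_of_eq_add_primitive hS ey
  exact c0.prodMk <| cy.prodMk <|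
    ((hΨ.comp_continuousOn (c0.prodMk cy)).add (il.continuousOn_of_eq_add_primitive hS el)).prodMk
      (iβ.continuousOn_of_eq_add_primitive hS eβ)

theorem dProc_self {E : Type*} [PseudoMetricSpace E] (S : ℝ) (z : ℝ → E) :
    dProc S z S z = 0 := by
  simp [dProc]

theorem dist_le_dProc_of_continuousOn {E : Type*} [PseudoMetricSpace E] {S t : ℝ}
    (ht : t ∈ Icc 0 S) {z₁ z₂ : ℝ → E}
    (h₁ : ContinuousOn z₁ (Icc 0 S)) (h₂ : ContinuousOn z₂ (Icc 0 S)) :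
    dist (z₁ t) (z₂ t) ≤ dProc S z₁ S z₂ := by
  have hclamp : ∀ t, clampT S t ∈ Icc 0 S := fun t =>
    ⟨le_max_left _ _, max_le (ht.1.trans ht.2) (min_le_right _ _)⟩
  have hclamp_t : clampT S t = t := by simp [clampT, ht.1, ht.2]
  -- without this bound the supremum in `dProc` would be the junk value `0`
  have hbdd : BddAbove (range fun t => dist (z₁ (clampT S t)) (z₂ (clampT S t))) := by
    refine ((isCompact_Icc.image_of_continuousOn
      (continuous_dist.comp_continuousOn (h₁.prodMk h₂))).bddAbove).mono ?_
    rintro _ ⟨t, rfl⟩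
    exact ⟨clampT S t, hclamp t, rfl⟩
  simpa [dProc, hclamp_t] using le_ciSup hbdd t

theorem profitable_reachable_locally_separated_general
    {n m₁ m₂ q : ℕ} (C : Set (Vec (m₁ + m₂))) (A : Set (Vec q))
    (f : Vec n → Vec q → Vec n) (g : Fin (m₁ + m₂) → Vec n → Vec n) (xck : Vec n)
    (Tgt : Set (ℝ × Vec n)) (K : EReal) (Ψ : ℝ → Vec n → ℝ)
    (ℓ0 : Vec n → Vec q → ℝ) (ℓhat1 : Vec n → ℝ → Vec (m₁ + m₂) → ℝ)
    (ρ : ℝ) (hρ : 0 < ρ)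
    (hStar : HpStar C A f g ℓ0 ℓhat1 Ψ)
    -- the reference canonical process of the rescaled system
    (S : ℝ) (hS : 0 < S)
    (w0b : ℝ → ℝ) (wb : ℝ → Vec (m₁ + m₂)) (αb : ℝ → Vec q)
    (y0b : ℝ → ℝ) (yb : ℝ → Vec n) (ylb βb : ℝ → ℝ)
    (href : IsRescaledSol f g ℓ0 ℓhat1 S w0b wb αb (fun _ => 0) 0 xck 0 0 y0b yb ylb βb)
    (hmeas : AEStronglyMeasurable wb (volume.restrict (Icc (0:ℝ) S)) ∧
      AEMeasurable w0b (volume.restrict (Icc (0:ℝ) S)) ∧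
      AEStronglyMeasurable αb (volume.restrict (Icc (0:ℝ) S)))
    (hmem : ∀ᵐ s ∂(volume.restrict (Icc (0:ℝ) S)),
      0 ≤ w0b s ∧ wb s ∈ C ∧ αb s ∈ A ∧ w0b s + ‖wb s‖ = 1)
    -- feasibility with β̄(S̄) < K
    (hβ : ((βb S : ℝ) : EReal) < K)
    -- the reference process is a local minimizer of the rescaled problem
    (hmin : ∃ δ' : ℝ, 0 < δ' ∧
      ∀ (w0 : ℝ → ℝ) (w : ℝ → Vec (m₁ + m₂)) (α : ℝ → Vec q) (ζ : ℝ → ℝ)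
        (y0 : ℝ → ℝ) (y : ℝ → Vec n) (yl β : ℝ → ℝ),
        AEStronglyMeasurable w (volume.restrict (Icc (0:ℝ) S)) →
        AEMeasurable w0 (volume.restrict (Icc (0:ℝ) S)) →
        AEStronglyMeasurable α (volume.restrict (Icc (0:ℝ) S)) →
        AEMeasurable ζ (volume.restrict (Icc (0:ℝ) S)) →
        (∀ᵐ s ∂(volume.restrict (Icc (0:ℝ) S)),
          0 ≤ w0 s ∧ w s ∈ C ∧ α s ∈ A ∧ w0 s + ‖w s‖ = 1 ∧ |ζ s| ≤ ρ) →
        IsRescaledSol f g ℓ0 ℓhat1 S w0 w α ζ 0 xck 0 0 y0 y yl β →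
        (y0 S, y S) ∈ Tgt → ((β S : ℝ) : EReal) ≤ K →
        dProc S (fun s => (y0 s, y s, Ψ (y0 s) (y s) + yl s, β s))
          S (fun s => (y0b s, yb s, Ψ (y0b s) (yb s) + ylb s, βb s)) < δ' →
        Ψ (y0b S) (yb S) + ylb S ≤ Ψ (y0 S) (y S) + yl S) :
    -- conclusion: local separation of 𝒫' and ℛ'_δ at (ȳ⁰, ȳ, ȳᶜ)(S̄)
    ∃ δ : ℝ, 0 < δ ∧ ∃ V ∈ 𝓝 ((y0b S, yb S, Ψ (y0b S) (yb S) + ylb S) : ℝ × Vec n × ℝ),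
      (({ z : ℝ × Vec n × ℝ | (z.1, z.2.1) ∈ Tgt ∧ z.2.2 < Ψ (y0b S) (yb S) + ylb S }
          ∪ {(y0b S, yb S, Ψ (y0b S) (yb S) + ylb S)}) ∩
        { z : ℝ × Vec n × ℝ |
          ∃ (w0 : ℝ → ℝ) (w : ℝ → Vec (m₁ + m₂)) (α : ℝ → Vec q) (ζ : ℝ → ℝ)
            (y0 : ℝ → ℝ) (y : ℝ → Vec n) (yl β : ℝ → ℝ),
            AEStronglyMeasurable w (volume.restrict (Icc (0:ℝ) S)) ∧
            AEMeasurable w0 (volume.restrict (Icc (0:ℝ) S)) ∧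
            AEStronglyMeasurable α (volume.restrict (Icc (0:ℝ) S)) ∧
            AEMeasurable ζ (volume.restrict (Icc (0:ℝ) S)) ∧
            (∀ᵐ s ∂(volume.restrict (Icc (0:ℝ) S)),
              0 ≤ w0 s ∧ w s ∈ C ∧ α s ∈ A ∧ w0 s + ‖w s‖ = 1 ∧ |ζ s| ≤ ρ) ∧
            IsRescaledSol f g ℓ0 ℓhat1 S w0 w α ζ 0 xck 0 0 y0 y yl β ∧
            dProc S (fun s => (y0 s, y s, Ψ (y0 s) (y s) + yl s, β s))
              S (fun s => (y0b s, yb s, Ψ (y0b s) (yb s) + ylb s, βb s)) < δ ∧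
            z = (y0 S, y S, Ψ (y0 S) (y S) + yl S) } ∩ V)
        = {(y0b S, yb S, Ψ (y0b S) (yb S) + ylb S)} := by
  obtain ⟨δ', hδ', hloc⟩ := hmin
  have hΨ : Continuous fun z : ℝ × Vec n => Ψ z.1 z.2 := hStar.hReg.hΨ.continuous
  have hrefc := href.continuousOn_costPath hΨ hS.le
  obtain ⟨ε, hε, hεK⟩ := Metric.eventually_nhds_iff.1
    ((continuous_coe_real_ereal.tendsto (βb S)).eventually (gt_mem_nhds hβ))
  refine ⟨min δ' ε, lt_min hδ' hε, univ, univ_mem,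
    eq_singleton_iff_unique_mem.2 ⟨⟨⟨Or.inr rfl, ?_⟩, trivial⟩, ?_⟩⟩
  · refine ⟨w0b, wb, αb, fun _ => 0, y0b, yb, ylb, βb, hmeas.1, hmeas.2.1, hmeas.2.2,
      aemeasurable_const, ?_, href, by simpa [dProc_self] using lt_min hδ' hε, rfl⟩
    filter_upwards [hmem] with s hs
    simpa [hρ.le] using hs
  rintro z ⟨⟨⟨hTz, hcz⟩ | hz, w0, w, α, ζ, y0, y, yl, β, hw, hw0, hα, hζ, hae, hsol, hd, rfl⟩, -⟩
  · have hdS := dist_le_dProc_of_continuousOn ⟨hS.le, le_rfl⟩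
      (hsol.continuousOn_costPath hΨ hS.le) hrefc
    have hβS : dist (β S) (βb S) < ε := by
      refine lt_of_le_of_lt (le_trans ?_ hdS) (hd.trans_le (min_le_right _ _))
      simp only [Prod.dist_eq]
      exact le_max_of_le_right (le_max_of_le_right (le_max_right _ _))
    exact absurd (hloc w0 w α ζ y0 y yl β hw hw0 hα hζ hae hsol hTz (hεK hβS).le
      (hd.trans_le (min_le_left _ _))) hcz.not_ge
  · exact hz

/-- **set separation.**  Assume (Hp)* with `ℓ̂₁(·,0,·) ≡ 0` and let the
reference canonical process (with `ζ ≡ 0`) be a local minimizer of the rescaled problem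
with `β̄(S̄) < K`.  Then there exists `δ > 0` such that the projected profitable set `𝒫'`
and the projected `δ`-reachable set `ℛ'_δ` are locally separated at
`(ȳ⁰, ȳ, ȳᶜ)(S̄)`. -/
theorem profitable_reachable_locally_separated
    {n m₁ m₂ q : ℕ} (C : Set (Vec (m₁ + m₂))) (A : Set (Vec q))
    (f : Vec n → Vec q → Vec n) (g : Fin (m₁ + m₂) → Vec n → Vec n) (xck : Vec n)
    (Tgt : Set (ℝ × Vec n)) (K : EReal) (Ψ : ℝ → Vec n → ℝ)
    (ℓ0 : Vec n → Vec q → ℝ) (ℓhat1 : Vec n → ℝ → Vec (m₁ + m₂) → ℝ)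
    (ρ : ℝ) (hρ : 0 < ρ) (hTgt : IsClosed Tgt) (hA : IsCompact A) (hK : (0:EReal) < K)
    (hStar : HpStar C A f g ℓ0 ℓhat1 Ψ) (hsplit : SplitCone m₁ m₂ C)
    (hl1zero : ∀ (x : Vec n) (w : Vec (m₁ + m₂)), ℓhat1 x 0 w = 0)
    -- the reference canonical process of the rescaled system
    (S : ℝ) (hS : 0 < S)
    (w0b : ℝ → ℝ) (wb : ℝ → Vec (m₁ + m₂)) (αb : ℝ → Vec q)
    (y0b : ℝ → ℝ) (yb : ℝ → Vec n) (ylb βb : ℝ → ℝ)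
    (href : IsRescaledSol f g ℓ0 ℓhat1 S w0b wb αb (fun _ => 0) 0 xck 0 0 y0b yb ylb βb)
    (hmeas : AEStronglyMeasurable wb (volume.restrict (Icc (0:ℝ) S)) ∧
      AEMeasurable w0b (volume.restrict (Icc (0:ℝ) S)) ∧
      AEStronglyMeasurable αb (volume.restrict (Icc (0:ℝ) S)))
    (hmem : ∀ᵐ s ∂(volume.restrict (Icc (0:ℝ) S)),
      0 ≤ w0b s ∧ wb s ∈ C ∧ αb s ∈ A ∧ w0b s + ‖wb s‖ = 1)
    -- feasibility with β̄(S̄) < K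
    (hfeas : (y0b S, yb S) ∈ Tgt) (hβ : ((βb S : ℝ) : EReal) < K)
    -- the reference process is a local minimizer of the rescaled problem
    (hmin : ∃ δ' : ℝ, 0 < δ' ∧
      ∀ (w0 : ℝ → ℝ) (w : ℝ → Vec (m₁ + m₂)) (α : ℝ → Vec q) (ζ : ℝ → ℝ)
        (y0 : ℝ → ℝ) (y : ℝ → Vec n) (yl β : ℝ → ℝ),
        AEStronglyMeasurable w (volume.restrict (Icc (0:ℝ) S)) →
        AEMeasurable w0 (volume.restrict (Icc (0:ℝ) S)) →
        AEStronglyMeasurable α (volume.restrict (Icc (0:ℝ) S)) →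
        AEMeasurable ζ (volume.restrict (Icc (0:ℝ) S)) →
        (∀ᵐ s ∂(volume.restrict (Icc (0:ℝ) S)),
          0 ≤ w0 s ∧ w s ∈ C ∧ α s ∈ A ∧ w0 s + ‖w s‖ = 1 ∧ |ζ s| ≤ ρ) →
        IsRescaledSol f g ℓ0 ℓhat1 S w0 w α ζ 0 xck 0 0 y0 y yl β →
        (y0 S, y S) ∈ Tgt → ((β S : ℝ) : EReal) ≤ K →
        dProc S (fun s => (y0 s, y s, Ψ (y0 s) (y s) + yl s, β s))
          S (fun s => (y0b s, yb s, Ψ (y0b s) (yb s) + ylb s, βb s)) < δ' →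
        Ψ (y0b S) (yb S) + ylb S ≤ Ψ (y0 S) (y S) + yl S) :
    -- conclusion: local separation of 𝒫' and ℛ'_δ at (ȳ⁰, ȳ, ȳᶜ)(S̄)
    ∃ δ : ℝ, 0 < δ ∧ ∃ V ∈ 𝓝 ((y0b S, yb S, Ψ (y0b S) (yb S) + ylb S) : ℝ × Vec n × ℝ),
      (({ z : ℝ × Vec n × ℝ | (z.1, z.2.1) ∈ Tgt ∧ z.2.2 < Ψ (y0b S) (yb S) + ylb S }
          ∪ {(y0b S, yb S, Ψ (y0b S) (yb S) + ylb S)}) ∩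
        { z : ℝ × Vec n × ℝ |
          ∃ (w0 : ℝ → ℝ) (w : ℝ → Vec (m₁ + m₂)) (α : ℝ → Vec q) (ζ : ℝ → ℝ)
            (y0 : ℝ → ℝ) (y : ℝ → Vec n) (yl β : ℝ → ℝ),
            AEStronglyMeasurable w (volume.restrict (Icc (0:ℝ) S)) ∧
            AEMeasurable w0 (volume.restrict (Icc (0:ℝ) S)) ∧
            AEStronglyMeasurable α (volume.restrict (Icc (0:ℝ) S)) ∧
            AEMeasurable ζ (volume.restrict (Icc (0:ℝ) S)) ∧
            (∀ᵐ s ∂(volume.restrict (Icc (0:ℝ) S)),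
              0 ≤ w0 s ∧ w s ∈ C ∧ α s ∈ A ∧ w0 s + ‖w s‖ = 1 ∧ |ζ s| ≤ ρ) ∧
            IsRescaledSol f g ℓ0 ℓhat1 S w0 w α ζ 0 xck 0 0 y0 y yl β ∧
            dProc S (fun s => (y0 s, y s, Ψ (y0 s) (y s) + yl s, β s))
              S (fun s => (y0b s, yb s, Ψ (y0b s) (yb s) + ylb s, βb s)) < δ ∧
            z = (y0 S, y S, Ψ (y0 S) (y S) + yl S) } ∩ V)
        = {(y0b S, yb S, Ψ (y0b S) (yb S) + ylb S)} :=
  profitable_reachable_locally_separated_general C A f g xck Tgt K Ψ ℓ0 ℓhat1 ρ hρ hStar S hS w0b wb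
    αb y0b yb ylb βb href hmeas hmem hβ hmin
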